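/- arXiv:2305.00130 — 2 statements merged into one kernel-verified Lean document; each statement's English description precedes it below -/
import Mathlib

section
/- For all formulas ψ and φ: ψ and φ take the same value under every valuation into every tetravalent modal algebra if and only if ψ and φ take the same value under every valuation into the four-element algebra M4m. That is, an equation between terms holds in every TMA iff it holds in M4m. -/
/-- A tetravalent modal algebra (TMA): a bounded distributive lattice with a
De Morgan negation `neg` and a modal operator `box` satisfying
`□a ⊓ ¬a = 0` and `¬□a ⊓ a = ¬a ⊓ a`. -/
class TMA (A : Type*) extends DistribLattice A, BoundedOrder A where
  neg : A → A
  box : A → A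
  neg_neg : ∀ a : A, neg (neg a) = a
  neg_sup : ∀ a b : A, neg (a ⊔ b) = neg a ⊓ neg b
  box_inf_neg : ∀ a : A, box a ⊓ neg a = ⊥
  neg_box_inf : ∀ a : A, neg (box a) ⊓ a = neg a ⊓ a

/-- The four-element algebra `M4m`, realized on `Bool × Bool` (componentwise lattice
order), with `0 = (false,false)`, `n = (true,false)`, `b = (false,true)`,
`1 = (true,true)`; `n` and `b` are incomparable, `n ⊓ b = 0`, `n ⊔ b = 1`. -/
abbrev M4 : Type := Bool × Bool
def M4.zero : M4 := (false, false)
def M4.n : M4 := (true, false)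
def M4.b : M4 := (false, true)
def M4.one : M4 := (true, true)

/-- `M4m` as a tetravalent modal algebra: `¬0 = 1`, `¬1 = 0`, `¬n = n`, `¬b = b`,
`□1 = 1` and `□0 = □n = □b = 0`. -/
instance : TMA M4 :=
  { (inferInstance : DistribLattice M4), (inferInstance : BoundedOrder M4) with
    neg := fun p => (!p.2, !p.1)
    box := fun p => if p = M4.one then M4.one else M4.zero
    neg_neg := by decide
    neg_sup := by decide
    box_inf_neg := by decide
    neg_box_inf := by decide }

/-- Formulas of the tetravalent modal logic TML, in the language `∧, ∨, ¬, □, ⊥`,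
over a countable set of propositional variables. -/
inductive Fm : Type
  | var : ℕ → Fm
  | bot : Fm
  | and : Fm → Fm → Fm
  | or : Fm → Fm → Fm
  | not : Fm → Fm
  | box : Fm → Fm

/-- The homomorphic extension of a valuation `v` of the propositional variables
in a TMA `A` to all formulas. -/
def Fm.val {A : Type*} [TMA A] (v : ℕ → A) : Fm → A
  | .var p => v p
  | .bot => ⊥
  | .and α β => Fm.val v α ⊓ Fm.val v β
  | .or α β => Fm.val v α ⊔ Fm.val v β
  | .not α => TMA.neg (Fm.val v α)
  | .box α => TMA.box (Fm.val v α)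


namespace TMAaux
variable {A : Type*} [TMA A]

local notation "∼" x => TMA.neg x
local notation "□" x => TMA.box x

lemma neg_antitone {a b : A} (h : a ≤ b) : (∼b) ≤ (∼a) := by
  have h1 : a ⊔ b = b := sup_eq_right.mpr h
  calc (∼b) = (∼(a ⊔ b)) := by rw [h1]
    _ = (∼a) ⊓ (∼b) := TMA.neg_sup a b
    _ ≤ (∼a) := inf_le_left

lemma neg_bot : (∼(⊥ : A)) = ⊤ :=
  le_antisymm le_top (by
    calc (⊤ : A) = (∼(∼(⊤:A))) := (TMA.neg_neg ⊤).symm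
      _ ≤ (∼(⊥:A)) := neg_antitone bot_le)

lemma neg_inf (a b : A) : (∼(a ⊓ b)) = (∼a) ⊔ (∼b) := by
  have h := TMA.neg_sup (∼a) (∼b)
  rw [TMA.neg_neg, TMA.neg_neg] at h
  rw [← h, TMA.neg_neg]

lemma box_sup_neg (a : A) : ((□a) ⊔ (∼a)) = a ⊔ (∼a) := by
  have h := congrArg TMA.neg (TMA.neg_box_inf a)
  rwa [neg_inf, neg_inf, TMA.neg_neg, TMA.neg_neg] at h

lemma box_eq_box_inf (a : A) : (□a) = (□a) ⊓ a := by
  calc (□a) = (□a) ⊓ ((□a) ⊔ (∼a)) := (inf_eq_left.mpr le_sup_left).symm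
    _ = (□a) ⊓ (a ⊔ (∼a)) := by rw [box_sup_neg]
    _ = ((□a) ⊓ a) ⊔ ((□a) ⊓ (∼a)) := inf_sup_left _ _ _
    _ = ((□a) ⊓ a) ⊔ ⊥ := by rw [TMA.box_inf_neg]
    _ = (□a) ⊓ a := sup_bot_eq _

lemma box_le (a : A) : (□a) ≤ a :=
  (le_of_eq (box_eq_box_inf a)).trans inf_le_right

lemma box_inf_negbox (a : A) : ((□a) ⊓ (∼(□a))) = ⊥ := by
  apply le_antisymm _ bot_le
  calc ((□a) ⊓ (∼(□a))) = ((□a) ⊓ a) ⊓ (∼(□a)) := by rw [← box_eq_box_inf]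
    _ = (□a) ⊓ (a ⊓ (∼(□a))) := inf_assoc _ _ _
    _ = (□a) ⊓ ((∼(□a)) ⊓ a) := by rw [inf_comm a]
    _ = (□a) ⊓ ((∼a) ⊓ a) := by rw [TMA.neg_box_inf]
    _ ≤ (□a) ⊓ (∼a) := inf_le_inf_left _ inf_le_left
    _ = ⊥ := TMA.box_inf_neg a

lemma box_sup_negbox (a : A) : ((□a) ⊔ (∼(□a))) = ⊤ := by
  have h := congrArg TMA.neg (box_inf_negbox a)
  rw [neg_inf, TMA.neg_neg, neg_bot] at h
  rw [sup_comm] at h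
  exact h

lemma box_decomp (a : A) : ((□a) ⊔ (a ⊓ (∼a))) = a := by
  rw [sup_inf_left, sup_eq_right.mpr (box_le a), box_sup_neg]
  exact inf_sup_self

open Classical in
/-- The TMA-homomorphism into `M4` induced by a prime ideal. -/
noncomputable def hom (J : Order.Ideal A) (x : A) : M4 :=
  (if x ∈ J then false else true, if (∼x) ∈ J then true else false)

variable (J : Order.Ideal A)

lemma mem_inf_iff (hP : J.IsPrime) {x y : A} : x ⊓ y ∈ J ↔ x ∈ J ∨ y ∈ J :=
  ⟨hP.mem_or_mem, fun h => h.elim (fun hx => J.lower inf_le_left hx)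
    (fun hy => J.lower inf_le_right hy)⟩

lemma M4.neg_def (p : M4) : TMA.neg p = (!p.2, !p.1) := rfl
lemma M4.box_def (p : M4) : TMA.box p = if p = M4.one then M4.one else M4.zero := rfl
lemma M4.inf_def (p q : M4) : p ⊓ q = (p.1 && q.1, p.2 && q.2) := rfl
lemma M4.sup_def (p q : M4) : p ⊔ q = (p.1 || q.1, p.2 || q.2) := rfl
lemma M4.bot_def : (⊥ : M4) = (false, false) := rfl

lemma hom_bot (hP : J.IsPrime) : hom J (⊥ : A) = ⊥ := by
  have h1 : (⊥ : A) ∈ J := J.bot_mem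
  have h2 : (∼(⊥ : A)) ∉ J := by
    rw [neg_bot]
    exact hP.toIsProper.top_notMem
  simp [hom, h1, h2, M4.bot_def]

lemma hom_inf (hP : J.IsPrime) (x y : A) : hom J (x ⊓ y) = hom J x ⊓ hom J y := by
  by_cases hx : x ∈ J <;> by_cases hy : y ∈ J <;>
    by_cases hnx : (∼x) ∈ J <;> by_cases hny : (∼y) ∈ J <;>
    simp [hom, M4.inf_def, neg_inf, mem_inf_iff J hP, Order.Ideal.sup_mem_iff,
      hx, hy, hnx, hny]

lemma hom_sup (hP : J.IsPrime) (x y : A) : hom J (x ⊔ y) = hom J x ⊔ hom J y := by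
  by_cases hx : x ∈ J <;> by_cases hy : y ∈ J <;>
    by_cases hnx : (∼x) ∈ J <;> by_cases hny : (∼y) ∈ J <;>
    simp [hom, M4.sup_def, TMA.neg_sup, mem_inf_iff J hP, Order.Ideal.sup_mem_iff,
      hx, hy, hnx, hny]

lemma hom_neg (x : A) : hom J (∼x) = TMA.neg (hom J x) := by
  by_cases hx : x ∈ J <;> by_cases hnx : (∼x) ∈ J <;>
    simp [hom, M4.neg_def, TMA.neg_neg, hx, hnx]

lemma negbox_mem_iff (hP : J.IsPrime) (x : A) : (∼(□x)) ∈ J ↔ (□x) ∉ J := by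
  constructor
  · intro h hb
    exact hP.toIsProper.top_notMem (box_sup_negbox x ▸ Order.Ideal.sup_mem hb h)
  · intro h
    have hbot : ((□x) ⊓ (∼(□x))) ∈ J := box_inf_negbox x ▸ J.bot_mem
    rcases hP.mem_or_mem hbot with h1 | h1
    · exact absurd h1 h
    · exact h1

lemma box_notMem_iff (hP : J.IsPrime) (x : A) : (□x) ∉ J ↔ (x ∉ J ∧ (∼x) ∈ J) := by
  constructor
  · intro h
    constructor
    · intro hx
      exact h (J.lower (box_le x) hx)
    · have hbot : ((□x) ⊓ (∼x)) ∈ J := TMA.box_inf_neg x ▸ J.bot_mem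
      rcases hP.mem_or_mem hbot with h1 | h1
      · exact absurd h1 h
      · exact h1
  · rintro ⟨hx, hnx⟩ hb
    have h1 : (x ⊓ (∼x)) ∈ J := J.lower inf_le_right hnx
    exact hx (box_decomp x ▸ Order.Ideal.sup_mem hb h1)

lemma hom_box (hP : J.IsPrime) (x : A) : hom J (□x) = TMA.box (hom J x) := by
  by_cases hb : (□x) ∈ J
  · have hnb : (∼(□x)) ∉ J := fun h => (negbox_mem_iff J hP x).mp h hb
    have hx : ¬ (x ∉ J ∧ (∼x) ∈ J) := fun h => (box_notMem_iff J hP x).mpr h hb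
    by_cases hxJ : x ∈ J
    · simp [hom, M4.box_def, hb, hnb, hxJ, M4.one, M4.zero, Prod.ext_iff]
    · have hnxJ : (∼x) ∉ J := fun h => hx ⟨hxJ, h⟩
      simp [hom, M4.box_def, hb, hnb, hxJ, hnxJ, M4.one, M4.zero, Prod.ext_iff]
  · have hnb : (∼(□x)) ∈ J := (negbox_mem_iff J hP x).mpr hb
    obtain ⟨hx, hnx⟩ := (box_notMem_iff J hP x).mp hb
    simp [hom, M4.box_def, hb, hnb, hx, hnx, M4.one, M4.zero, Prod.ext_iff]

lemma hom_val (hP : J.IsPrime) (v : ℕ → A) : ∀ f : Fm,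
    Fm.val (fun n => hom J (v n)) f = hom J (Fm.val v f)
  | .var p => rfl
  | .bot => (hom_bot J hP).symm
  | .and α β => by
      rw [Fm.val, Fm.val, hom_val hP v α, hom_val hP v β, hom_inf J hP]
  | .or α β => by
      rw [Fm.val, Fm.val, hom_val hP v α, hom_val hP v β, hom_sup J hP]
  | .not α => by
      rw [Fm.val, Fm.val, hom_val hP v α, hom_neg J]
  | .box α => by
      rw [Fm.val, Fm.val, hom_val hP v α, hom_box J hP]

/-- Separation: if `¬ c ≤ d` there is a prime ideal containing `d` but not `c`. -/
lemma sep {c d : A} (hcd : ¬ c ≤ d) :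
    ∃ J : Order.Ideal A, J.IsPrime ∧ d ∈ J ∧ c ∉ J := by
  have hdisj : Disjoint ((Order.PFilter.principal c : Order.PFilter A) : Set A)
      ((Order.Ideal.principal d : Order.Ideal A) : Set A) := by
    rw [Set.disjoint_left]
    intro x hxF hxI
    exact hcd (le_trans (Order.PFilter.mem_principal.mp hxF) (Order.Ideal.mem_principal.mp hxI))
  obtain ⟨J, hJp, hIJ, hJF⟩ := DistribLattice.prime_ideal_of_disjoint_filter_ideal hdisj
  refine ⟨J, hJp, hIJ Order.Ideal.mem_principal_self, fun hc => ?_⟩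
  exact Set.disjoint_left.mp hJF (Order.PFilter.mem_principal.mpr le_rfl) hc

end TMAaux

/-- An equation between terms holds in every tetravalent modal algebra iff it
holds in the four-element algebra `M4m`. -/
theorem stmt5 (ψ φ : Fm) :
    (∀ (A : Type) [TMA A] (v : ℕ → A), Fm.val v ψ = Fm.val v φ) ↔
    (∀ v : ℕ → M4, Fm.val v ψ = Fm.val v φ) := by
  constructor
  · intro h v
    exact h M4 v
  · intro hM A _ v
    by_contra hne
    have hle : ¬ Fm.val v ψ ≤ Fm.val v φ ∨ ¬ Fm.val v φ ≤ Fm.val v ψ := by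
      by_contra h'
      push_neg at h'
      exact hne (le_antisymm h'.1 h'.2)
    have key : ∀ J : Order.Ideal A, J.IsPrime →
        TMAaux.hom J (Fm.val v ψ) = TMAaux.hom J (Fm.val v φ) := by
      intro J hJ
      rw [← TMAaux.hom_val J hJ v ψ, ← TMAaux.hom_val J hJ v φ]
      exact hM _
    rcases hle with h1 | h1
    · obtain ⟨J, hJ, hd, hc⟩ := TMAaux.sep h1
      have := key J hJ
      simp [TMAaux.hom, hd, hc] at this
    · obtain ⟨J, hJ, hd, hc⟩ := TMAaux.sep h1
      have := key J hJ
      simp [TMAaux.hom, hd, hc] at this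
end

section
/- The Rule of Necessitation is admissible for TML: if a formula α satisfies v(α) ∈ {b, 1} for every valuation v into M4m (i.e., α is valid in the matrix ⟨M4m, {b, 1}⟩), then v(□α) ∈ {b, 1} for every valuation v into M4m (indeed v(□α) = 1 for every valuation v). -/
def M4.swap (p : M4) : M4 := (p.2, p.1)

lemma val_swap (v : ℕ → M4) (α : Fm) :
    Fm.val (fun p => M4.swap (v p)) α = M4.swap (Fm.val v α) := by
  induction α with
  | var p => rfl
  | bot => rfl
  | and a b iha ihb => simp only [Fm.val, iha, ihb]; rfl
  | or a b iha ihb => simp only [Fm.val, iha, ihb]; rfl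
  | not a iha => simp only [Fm.val, iha]; rfl
  | box a iha =>
      simp only [Fm.val, iha]
      show (if _ then _ else _) = M4.swap (if _ then _ else _)
      rcases Fm.val v a with ⟨x, y⟩
      cases x <;> cases y <;> decide

lemma val_one (α : Fm)
    (h : ∀ v : ℕ → M4, Fm.val v α = M4.b ∨ Fm.val v α = M4.one)
    (v : ℕ → M4) : Fm.val v α = M4.one := by
  rcases h v with hb | h1
  · exfalso
    have := h (fun p => M4.swap (v p))
    rw [val_swap, hb] at this
    revert this; decide
  · exact h1

/-- The Rule of Necessitation is admissible for TML: if `α` is valid in the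
matrix `⟨M4m, {b,1}⟩`, then so is `□α`; indeed `v (□α) = 1` for every
valuation `v`. -/
theorem stmt19 (α : Fm)
    (h : ∀ v : ℕ → M4, Fm.val v α = M4.b ∨ Fm.val v α = M4.one) :
    (∀ v : ℕ → M4, Fm.val v (Fm.box α) = M4.b ∨ Fm.val v (Fm.box α) = M4.one) ∧
    (∀ v : ℕ → M4, Fm.val v (Fm.box α) = M4.one) := by
  have key : ∀ v : ℕ → M4, Fm.val v (Fm.box α) = M4.one := by
    intro v
    show TMA.box (Fm.val v α) = M4.one
    rw [val_one α h v]
    rfl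
  exact ⟨fun v => Or.inr (key v), key⟩
end
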